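/- Write a = λ₁² + λ₂² − λ₃² − λ₄² and b = λ₁λ₃ + λ₂λ₄, and R_{ijkl} = R(Eᵢ,Eⱼ,E_k,E_l). Then: R₁₂₁₂ = R₃₄₃₄ = a + 3μ₁²; R₁₂₃₄ = R₃₄₁₂ = −a − 2μ₁² + μ₂²; R₁₄₁₄ = R₂₃₂₃ = −a + 3μ₂²; R₁₄₂₃ = R₂₃₁₄ = a + μ₁² − 2μ₂²; R₁₂₁₄ = −R₁₂₂₃ = −R₂₃₁₂ = R₂₃₃₄ = R₁₄₁₂ = −R₁₄₃₄ = −R₃₄₁₄ = R₃₄₂₃ = 2b + 3μ₁μ₂; R₁₃₂₄ = R₂₄₁₃ = −(μ₁² + μ₂²); R₁₅₃₅ = R₂₅₄₅ = −2μ₁μ₂; R₁₅₁₅ = R₂₅₂₅ = −R₃₅₃₅ = −R₄₅₄₅ = −μ₁² + μ₂². -/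

import Mathlib

/-!
The metric `g` is diagonal with `g(Eₖ,Eₖ) = εₖ = ±1`, hence nondegenerate, so the Koszul formula
determines `∇` completely: the `k`-th coordinate of `∇_x y` is `εₖ/2` times the right-hand side
at `z = Eₖ`. With `∇` explicit, each component `R_{ijkl}` is a polynomial identity in `λ, μ`.
-/

noncomputable section

/-- The underlying 5-dimensional real vector space. -/
abbrev V : Type := Fin 5 → ℝ

/-- The basis `E₁,…,E₅` (0-indexed: `E 0 = E₁`, …, `E 4 = E₅`). -/
def E (i : Fin 5) : V := Pi.single i 1

/-- `ξ = E₅`. -/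
def xiV : V := E 4

/-- The almost contact endomorphism `φ`. -/
def phiV (x : V) : V := ![-x 2, -x 3, x 0, x 1, 0]

/-- The contact form `η`. -/
def etaF (x : V) : ℝ := x 4

/-- The B-metric `g`. -/
def gB (x y : V) : ℝ := x 0 * y 0 + x 1 * y 1 - x 2 * y 2 - x 3 * y 3 + x 4 * y 4

/-- The signs `εᵢ = g(Eᵢ,Eᵢ)`. -/
def eps : Fin 5 → ℝ := ![1, 1, -1, -1, 1]

/-- The Lie bracket: the unique skew-symmetric bilinear bracket whose only nonzero
basis brackets are `[E₁,E₂] = -[E₃,E₄] = -λ₁E₁ - λ₂E₂ + λ₃E₃ + λ₄E₄ + 2μ₁E₅` and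
`[E₁,E₄] = -[E₂,E₃] = -λ₃E₁ - λ₄E₂ - λ₁E₃ - λ₂E₄ + 2μ₂E₅`. -/
def brkt (l1 l2 l3 l4 m1 m2 : ℝ) (x y : V) : V :=
  (x 0 * y 1 - x 1 * y 0 - x 2 * y 3 + x 3 * y 2) •
    (![-l1, -l2, l3, l4, 2 * m1] : V) +
  (x 0 * y 3 - x 3 * y 0 - x 1 * y 2 + x 2 * y 1) •
    (![-l3, -l4, -l1, -l2, 2 * m2] : V)

/-- The torsion `T(x,y) = 2(η(x)∇_yξ − η(y)∇_xξ + g(∇_xξ,y)ξ)`. -/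
def Tors (nabla : V → V → V) (x y : V) : V :=
  (2 : ℝ) • (etaF x • nabla y xiV - etaF y • nabla x xiV + gB (nabla x xiV) y • xiV)

/-- The φKT-connection `D_x y = ∇_x y + (1/2)T(x,y)`. -/
def Dconn (nabla : V → V → V) (x y : V) : V :=
  nabla x y + (1 / 2 : ℝ) • Tors nabla x y

/-- Curvature of a connection: `∇_x∇_y z − ∇_y∇_x z − ∇_{[x,y]}z`. -/
def curv (br conn : V → V → V) (x y z : V) : V :=
  conn x (conn y z) - conn y (conn x z) - conn (br x y) z

/-- Curvature (0,4)-tensor. -/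
def curv4 (br conn : V → V → V) (x y z w : V) : ℝ := gB (curv br conn x y z) w

/-- Ricci tensor. -/
def ricci (br conn : V → V → V) (y z : V) : ℝ :=
  ∑ i : Fin 5, eps i * curv4 br conn (E i) y z (E i)

/-- Scalar curvature. -/
def scal (br conn : V → V → V) : ℝ :=
  ∑ i : Fin 5, ∑ j : Fin 5, eps i * eps j * curv4 br conn (E i) (E j) (E j) (E i)

/-- `(∇_xφ)y = ∇_x(φy) − φ(∇_x y)`. -/
def nphi (nabla : V → V → V) (x y : V) : V := nabla x (phiV y) - phiV (nabla x y)

/-- The square norm `‖∇φ‖²`. -/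
def sqnormNphi (nabla : V → V → V) : ℝ :=
  ∑ i : Fin 5, ∑ k : Fin 5,
    eps i * eps k * gB (nphi nabla (E i) (E k)) (nphi nabla (E i) (E k))

lemma gB_E (x : V) (k : Fin 5) : gB x (E k) = eps k * x k := by
  fin_cases k <;> simp [gB, E, eps]

lemma eps_mul_self (k : Fin 5) : eps k * eps k = 1 := by
  fin_cases k <;> norm_num [eps]

lemma eq_of_gB_E {x y : V} (h : ∀ k, gB x (E k) = gB y (E k)) : x = y := by
  funext k
  have hk := congrArg (eps k * ·) (h k)
  simpa only [gB_E, ← mul_assoc, eps_mul_self, one_mul] using hk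

def leviCivita (br : V → V → V) (x y : V) : V := fun k =>
  eps k / 2 * (gB (br x y) (E k) + gB (br (E k) x) y + gB (br (E k) y) x)

lemma eq_leviCivita_of_koszul (br nabla : V → V → V)
    (hkos : ∀ x y z : V, 2 * gB (nabla x y) z = gB (br x y) z + gB (br z x) y + gB (br z y) x) :
    nabla = leviCivita br := by
  funext x y
  refine eq_of_gB_E fun k => ?_
  rw [gB_E, gB_E, leviCivita, ← mul_assoc, mul_div_assoc', eps_mul_self, ← hkos, gB_E]
  ring

set_option maxHeartbeats 400000 in
theorem statement_12 (l1 l2 l3 l4 m1 m2 : ℝ)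
    (nabla : V → V → V)
    (hkos : ∀ x y z : V, 2 * gB (nabla x y) z =
      gB (brkt l1 l2 l3 l4 m1 m2 x y) z + gB (brkt l1 l2 l3 l4 m1 m2 z x) y +
        gB (brkt l1 l2 l3 l4 m1 m2 z y) x) :
    ∀ a b : ℝ, a = l1 ^ 2 + l2 ^ 2 - l3 ^ 2 - l4 ^ 2 → b = l1 * l3 + l2 * l4 →
(      curv4 (brkt l1 l2 l3 l4 m1 m2) nabla (E 0) (E 1) (E 0) (E 1) = a + 3 * m1 ^ 2 ∧
      curv4 (brkt l1 l2 l3 l4 m1 m2) nabla (E 2) (E 3) (E 2) (E 3) = a + 3 * m1 ^ 2 ∧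
      curv4 (brkt l1 l2 l3 l4 m1 m2) nabla (E 0) (E 1) (E 2) (E 3) = -a - 2 * m1 ^ 2 + m2 ^ 2 ∧
      curv4 (brkt l1 l2 l3 l4 m1 m2) nabla (E 2) (E 3) (E 0) (E 1) = -a - 2 * m1 ^ 2 + m2 ^ 2 ∧
      curv4 (brkt l1 l2 l3 l4 m1 m2) nabla (E 0) (E 3) (E 0) (E 3) = -a + 3 * m2 ^ 2 ∧
      curv4 (brkt l1 l2 l3 l4 m1 m2) nabla (E 1) (E 2) (E 1) (E 2) = -a + 3 * m2 ^ 2 ∧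
      curv4 (brkt l1 l2 l3 l4 m1 m2) nabla (E 0) (E 3) (E 1) (E 2) = a + m1 ^ 2 - 2 * m2 ^ 2 ∧
      curv4 (brkt l1 l2 l3 l4 m1 m2) nabla (E 1) (E 2) (E 0) (E 3) = a + m1 ^ 2 - 2 * m2 ^ 2 ∧
      curv4 (brkt l1 l2 l3 l4 m1 m2) nabla (E 0) (E 1) (E 0) (E 3) = 2 * b + 3 * m1 * m2 ∧
      -(curv4 (brkt l1 l2 l3 l4 m1 m2) nabla (E 0) (E 1) (E 1) (E 2)) = 2 * b + 3 * m1 * m2 ∧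
      -(curv4 (brkt l1 l2 l3 l4 m1 m2) nabla (E 1) (E 2) (E 0) (E 1)) = 2 * b + 3 * m1 * m2 ∧
      curv4 (brkt l1 l2 l3 l4 m1 m2) nabla (E 1) (E 2) (E 2) (E 3) = 2 * b + 3 * m1 * m2 ∧
      curv4 (brkt l1 l2 l3 l4 m1 m2) nabla (E 0) (E 3) (E 0) (E 1) = 2 * b + 3 * m1 * m2 ∧
      -(curv4 (brkt l1 l2 l3 l4 m1 m2) nabla (E 0) (E 3) (E 2) (E 3)) = 2 * b + 3 * m1 * m2 ∧
      -(curv4 (brkt l1 l2 l3 l4 m1 m2) nabla (E 2) (E 3) (E 0) (E 3)) = 2 * b + 3 * m1 * m2 ∧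
      curv4 (brkt l1 l2 l3 l4 m1 m2) nabla (E 2) (E 3) (E 1) (E 2) = 2 * b + 3 * m1 * m2 ∧
      curv4 (brkt l1 l2 l3 l4 m1 m2) nabla (E 0) (E 2) (E 1) (E 3) = -(m1 ^ 2 + m2 ^ 2) ∧
      curv4 (brkt l1 l2 l3 l4 m1 m2) nabla (E 1) (E 3) (E 0) (E 2) = -(m1 ^ 2 + m2 ^ 2) ∧
      curv4 (brkt l1 l2 l3 l4 m1 m2) nabla (E 0) (E 4) (E 2) (E 4) = -(2 * m1 * m2) ∧
      curv4 (brkt l1 l2 l3 l4 m1 m2) nabla (E 1) (E 4) (E 3) (E 4) = -(2 * m1 * m2) ∧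
      curv4 (brkt l1 l2 l3 l4 m1 m2) nabla (E 0) (E 4) (E 0) (E 4) = -m1 ^ 2 + m2 ^ 2 ∧
      curv4 (brkt l1 l2 l3 l4 m1 m2) nabla (E 1) (E 4) (E 1) (E 4) = -m1 ^ 2 + m2 ^ 2 ∧
      -(curv4 (brkt l1 l2 l3 l4 m1 m2) nabla (E 2) (E 4) (E 2) (E 4)) = -m1 ^ 2 + m2 ^ 2 ∧
      -(curv4 (brkt l1 l2 l3 l4 m1 m2) nabla (E 3) (E 4) (E 3) (E 4)) = -m1 ^ 2 + m2 ^ 2) := by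
  rintro a b rfl rfl
  rw [eq_leviCivita_of_koszul _ nabla hkos]
  and_intros <;>
  · simp only [curv4, curv, leviCivita, gB, brkt, E, eps, Pi.single_apply, Fin.reduceEq, ↓reduceIte,
      Pi.add_apply, Pi.sub_apply, Pi.smul_apply, smul_eq_mul, Matrix.cons_val, Fin.isValue,
      mul_zero, zero_mul, mul_one, one_mul, add_zero, zero_add, sub_zero, zero_sub, sub_self]
    ring
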